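/- arXiv:1805.08283 — 3 statements merged into one kernel-verified Lean document; each statement's English description precedes it below -/
import Mathlib

section
/- Let B be standard Brownian motion, n = ab with a, b positive integers and b even. Define the Brownian weighted-BM flat top quantity σ̃²_w = (2b/(a-1))∑_{l=0}^{a-1}(B̄_l(b) - B̄)² - ((b/2)/(2a-1))∑_{l=0}^{2a-1}(B̄_l(b/2) - B̄)². Then E[σ̃²_w] = 1. -/
/-!
Over the times `0 ≤ s ≤ s + k ≤ N`, the block deviation `(B (s + k) - B s) / k - B N / N` is a
linear combination of the three independent increments of `B` over `[0, s]`, `[s, s + k]` and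
`[s + k, N]`, so its second moment is `∑ cᵢ² Δtᵢ = 1 / k - 1 / N`. With `N = n = a b` the `a` blocks
of length `b` contribute `a (1 / b - 1 / n) = (a - 1) / b` and the `2 a` blocks of length `b / 2`
contribute `2 a (2 / b - 1 / n) = 2 (2 a - 1) / b`, so the two weighted terms are `2` and `1`.
-/

open MeasureTheory ProbabilityTheory

/-- `B` is a standard one-dimensional Brownian motion under `μ`. -/
def IsStandardBM {Ω : Type*} [MeasurableSpace Ω] (μ : Measure Ω) (B : ℝ → Ω → ℝ) : Prop :=
  IsProbabilityMeasure μ ∧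
  (∀ t : ℝ, Measurable (B t)) ∧
  (∀ ω, B 0 ω = 0) ∧
  (∀ s t : ℝ, 0 ≤ s → s ≤ t →
    μ.map (fun ω => B t ω - B s ω) = gaussianReal 0 (Real.toNNReal (t - s))) ∧
  (∀ (m : ℕ) (t : ℕ → ℝ), Monotone t → (∀ i, 0 ≤ t i) →
    iIndepFun
      (fun i : Fin m => fun ω => B (t (i + 1)) ω - B (t i) ω) μ)

namespace IsStandardBM

variable {Ω : Type*} [MeasurableSpace Ω] {μ : Measure Ω} {B : ℝ → Ω → ℝ} {s t k N : ℝ}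

lemma hasLaw_increment (hB : IsStandardBM μ B) (hs : 0 ≤ s) (hst : s ≤ t) :
    HasLaw (fun ω => B t ω - B s ω) (gaussianReal 0 (t - s).toNNReal) μ :=
  ⟨((hB.2.1 t).sub (hB.2.1 s)).aemeasurable, hB.2.2.2.1 s t hs hst⟩

lemma memLp_increment (hB : IsStandardBM μ B) (hs : 0 ≤ s) (hst : s ≤ t) :
    MemLp (fun ω => B t ω - B s ω) 2 μ := by
  have hX := hB.hasLaw_increment hs hst
  refine (memLp_map_measure_iff aestronglyMeasurable_id hX.aemeasurable).1 ?_
  rw [hX.map_eq]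
  exact memLp_id_gaussianReal 2

lemma memLp (hB : IsStandardBM μ B) (ht : 0 ≤ t) : MemLp (B t) 2 μ := by
  simpa [hB.2.2.1] using hB.memLp_increment le_rfl ht

lemma integral_increment (hB : IsStandardBM μ B) (hs : 0 ≤ s) (hst : s ≤ t) :
    μ[fun ω => B t ω - B s ω] = 0 := by
  rw [(hB.hasLaw_increment hs hst).integral_eq, integral_id_gaussianReal]

lemma variance_increment (hB : IsStandardBM μ B) (hs : 0 ≤ s) (hst : s ≤ t) :
    Var[fun ω => B t ω - B s ω; μ] = t - s := by
  rw [(hB.hasLaw_increment hs hst).variance_eq, variance_id_gaussianReal,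
    Real.coe_toNNReal _ (sub_nonneg.2 hst)]

/-- Itô isometry for step integrands. -/
theorem integral_sum_mul_increment_sq (hB : IsStandardBM μ B) {m : ℕ} {τ : ℕ → ℝ}
    (hτ : Monotone τ) (hτ₀ : ∀ i, 0 ≤ τ i) (c : Fin m → ℝ) :
    ∫ ω, (∑ i : Fin m, c i * (B (τ (i + 1)) ω - B (τ i) ω)) ^ 2 ∂μ
      = ∑ i : Fin m, c i ^ 2 * (τ (i + 1) - τ i) := by
  have := hB.1
  set X : Fin m → Ω → ℝ := fun i ω => c i * (B (τ (i + 1)) ω - B (τ i) ω)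
  have hmono : ∀ i : Fin m, τ i ≤ τ (i + 1) := fun i => hτ (Nat.le_succ i)
  have hX : ∀ i, MemLp (X i) 2 μ := fun i =>
    (hB.memLp_increment (hτ₀ i) (hmono i)).const_mul (c i)
  have hindep : iIndepFun X μ :=
    (hB.2.2.2.2 m τ hτ hτ₀).comp (fun i x => c i * x) fun i => measurable_const_mul (c i)
  have hmean : μ[∑ i, X i] = 0 := by
    rw [Finset.sum_fn, integral_finsetSum _ fun i _ => (hX i).integrable one_le_two]
    refine Finset.sum_eq_zero fun i _ => ?_
    rw [integral_const_mul, hB.integral_increment (hτ₀ i) (hmono i), mul_zero]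
  calc ∫ ω, (∑ i, X i ω) ^ 2 ∂μ
      = Var[∑ i, X i; μ] := by
        rw [variance_of_integral_eq_zero (memLp_finsetSum' _ fun i _ => hX i).aemeasurable hmean]
        simp only [Finset.sum_apply]
    _ = ∑ i, Var[X i; μ] :=
        IndepFun.variance_sum (fun i _ => hX i) fun i _ j _ hij => hindep.indepFun hij
    _ = ∑ i : Fin m, c i ^ 2 * (τ (i + 1) - τ i) := by
        simp only [X, variance_const_mul, hB.variance_increment (hτ₀ _) (hmono _)]

lemma integrable_blockMean_sub_mean_sq (hB : IsStandardBM μ B) (hs : 0 ≤ s) (hk : 0 ≤ k)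
    (hN : 0 ≤ N) :
    Integrable (fun ω => ((B (s + k) ω - B s ω) / k - B N ω / N) ^ 2) μ := by
  simp only [div_eq_inv_mul]
  exact (((hB.memLp_increment hs (le_add_of_nonneg_right hk)).const_mul k⁻¹).sub
    ((hB.memLp hN).const_mul N⁻¹)).integrable_sq

lemma integral_blockMean_sub_mean_sq (hB : IsStandardBM μ B) (hs : 0 ≤ s) (hk : 0 < k)
    (hN : s + k ≤ N) :
    ∫ ω, ((B (s + k) ω - B s ω) / k - B N ω / N) ^ 2 ∂μ = 1 / k - 1 / N := by
  let τ : ℕ → ℝ := fun | 0 => 0 | 1 => s | 2 => s + k | _ => N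
  have hτ : Monotone τ := monotone_nat_of_le_succ <| by
    rintro (_ | _ | _ | i) <;> simp only [τ, zero_add, Nat.reduceAdd] <;> linarith
  have hτ₀ : ∀ i, 0 ≤ τ i := fun i => hτ (Nat.zero_le i)
  have hN₀ : 0 < N := by linarith
  have hdecomp : ∀ ω, (B (s + k) ω - B s ω) / k - B N ω / N
      = ∑ i : Fin 3, ![-N⁻¹, k⁻¹ - N⁻¹, -N⁻¹] i * (B (τ (i + 1)) ω - B (τ i) ω) := by
    intro ω
    rw [Fin.sum_univ_three]
    change _ = -N⁻¹ * (B s ω - B 0 ω) + (k⁻¹ - N⁻¹) * (B (s + k) ω - B s ω)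
      + -N⁻¹ * (B N ω - B (s + k) ω)
    rw [hB.2.2.1]
    field_simp
    ring
  simp only [hdecomp]
  rw [hB.integral_sum_mul_increment_sq hτ hτ₀, Fin.sum_univ_three]
  change (-N⁻¹) ^ 2 * (s - 0) + (k⁻¹ - N⁻¹) ^ 2 * (s + k - s) + (-N⁻¹) ^ 2 * (N - (s + k)) = _
  field_simp
  ring

lemma integrable_sum_blockMean_sub_mean_sq (hB : IsStandardBM μ B) (m : ℕ)
    (hk : 0 ≤ k) (hN : 0 ≤ N) :
    Integrable (fun ω => ∑ l ∈ Finset.range m,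
      ((B (l * k + k) ω - B (l * k) ω) / k - B N ω / N) ^ 2) μ :=
  integrable_finsetSum _ fun l _ =>
    hB.integrable_blockMean_sub_mean_sq (mul_nonneg l.cast_nonneg hk) hk hN

lemma integral_sum_blockMean_sub_mean_sq (hB : IsStandardBM μ B) (m : ℕ)
    (hk : 0 < k) (hN : m * k ≤ N) :
    ∫ ω, ∑ l ∈ Finset.range m, ((B (l * k + k) ω - B (l * k) ω) / k - B N ω / N) ^ 2 ∂μ
      = m * (1 / k - 1 / N) := by
  rw [integral_finsetSum _ fun l _ => hB.integrable_blockMean_sub_mean_sq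
    (mul_nonneg l.cast_nonneg hk.le) hk.le ((mul_nonneg m.cast_nonneg hk.le).trans hN)]
  rw [Finset.sum_congr rfl fun l hl => hB.integral_blockMean_sub_mean_sq
    (mul_nonneg l.cast_nonneg hk.le) hk ?_]
  · rw [Finset.sum_const, Finset.card_range, nsmul_eq_mul]
  · have : (l : ℝ) + 1 ≤ m := by exact_mod_cast Finset.mem_range.1 hl
    nlinarith

end IsStandardBM

theorem weighted_bm_flat_top_brownian_expectation
    {Ω : Type*} [MeasurableSpace Ω] (μ : Measure Ω) (B : ℝ → Ω → ℝ)
    (hB : IsStandardBM μ B) (a b : ℕ) (ha : 2 ≤ a) (hb : 2 ≤ b) (hbe : Even b)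
    (n : ℕ) (hn : n = a * b) :
    ∫ ω,
        ((2 * b / ((a : ℝ) - 1)) * ∑ l ∈ Finset.range a,
          ((B ((l * b + b : ℕ) : ℝ) ω - B ((l * b : ℕ) : ℝ) ω) / (b : ℝ)
            - B (n : ℝ) ω / (n : ℝ)) ^ 2
        - (((b : ℝ) / 2) / (2 * (a : ℝ) - 1)) * ∑ l ∈ Finset.range (2 * a),
          ((B ((l * (b / 2) + b / 2 : ℕ) : ℝ) ω - B ((l * (b / 2) : ℕ) : ℝ) ω) / ((b : ℝ) / 2)
            - B (n : ℝ) ω / (n : ℝ)) ^ 2) ∂μ = 1 := by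
  have hhalf : ((b / 2 : ℕ) : ℝ) = (b : ℝ) / 2 := by
    rw [Nat.cast_div_charZero hbe.two_dvd, Nat.cast_ofNat]
  have hn' : (n : ℝ) = a * b := by exact_mod_cast hn
  have ha' : (2 : ℝ) ≤ a := by exact_mod_cast ha
  have hb₀ : (0 : ℝ) < b := by exact_mod_cast (by omega : 0 < b)
  have ha₁ : (a : ℝ) - 1 ≠ 0 := by linarith
  have ha₂ : 2 * (a : ℝ) - 1 ≠ 0 := by linarith
  rw [← hhalf]
  push_cast
  rw [integral_sub
      ((hB.integrable_sum_blockMean_sub_mean_sq _ (by positivity) (by positivity)).const_mul _)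
      ((hB.integrable_sum_blockMean_sub_mean_sq _ (by positivity) (by positivity)).const_mul _),
    integral_const_mul, integral_const_mul,
    hB.integral_sum_blockMean_sub_mean_sq _ hb₀ (by rw [hn']),
    hB.integral_sum_blockMean_sub_mean_sq _ (by rw [hhalf]; positivity)
      (le_of_eq (by rw [hhalf, hn']; push_cast; ring)),
    hhalf, hn']
  push_cast
  field_simp
  ring
end

section
/- Under nonoverlapping-batch covariance structure (batches with batch size b): nonoverlapping batch means Z₁ = B̄_p(b) - B̄ and Z₂ = B̄_q(b) - B̄ with p ≠ q are jointly Gaussian with E[Z₁²Z₂²] = 3/n² + 1/b² - 2/(bn), whence summing over all ordered pairs, E[(∑_{l=0}^{a-1}(B̄_l(b)-B̄)²)²] = 3a((n-b)/(bn))² + a(a-1)(3/n² + 1/b² - 2/(bn)), where n = ab. -/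
/-!
Write `Xₖ = B((k+1)b) - B(kb)` for the independent `N(0, b)` batch increments. Then
`B̄_l(b) - B̄ = ∑ₖ cₗₖ Xₖ` with `c = (1 - J/a)/b`, where `J` is the all-ones matrix; since
`1 - J/a` is a projection, `b c² = c`, which gives the variance `1/b - 1/n` and the
covariance `-1/n` of the batch means. Every linear form `W = ∑ₖ eₖ Xₖ` is centred Gaussian, so
`E[W⁴] = 3 E[W²]²`, the fourth derivative at `0` of the moment generating function
`exp (E[W²] t² / 2)`. Polarizing this identity over `W = Y ± Z` gives Isserlis' formula
`E[Y²Z²] = E[Y²] E[Z²] + 2 E[YZ]²`, and both claims follow by summing.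
-/

open MeasureTheory ProbabilityTheory

open Real Polynomial
open scoped NNReal

lemma deriv_eval_mul_exp_mul_sq_div_two (v : ℝ) (P : ℝ[X]) :
    deriv (fun t => P.eval t * rexp (v * t ^ 2 / 2)) =
      fun t => (derivative P + C v * X * P).eval t * rexp (v * t ^ 2 / 2) := by
  ext t
  rw [deriv_fun_mul P.differentiableAt (by fun_prop), deriv_exp (by fun_prop), Polynomial.deriv]
  simp only [deriv_div_const, differentiableAt_const, differentiableAt_fun_id,
    DifferentiableAt.fun_pow, deriv_fun_mul, deriv_const', zero_mul, deriv_fun_pow, Nat.cast_ofNat,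
    Nat.add_one_sub_one, pow_one, deriv_id'', mul_one, zero_add, eval_add, eval_mul, eval_C, eval_X]
  ring

lemma iteratedDeriv_four_exp_mul_sq_div_two (v : ℝ) :
    iteratedDeriv 4 (fun t => rexp (v * t ^ 2 / 2)) 0 = 3 * v ^ 2 := by
  have h : (fun t => rexp (v * t ^ 2 / 2)) = fun t => (1 : ℝ[X]).eval t * rexp (v * t ^ 2 / 2) := by
    simp
  simp only [iteratedDeriv_succ, iteratedDeriv_zero, h, deriv_eval_mul_exp_mul_sq_div_two]
  simp only [derivative_one, mul_one, zero_add, derivative_mul, derivative_C, zero_mul,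
    derivative_X, derivative_add, mul_zero, add_zero, eval_add, eval_mul, eval_C, eval_X, ne_eq,
    OfNat.ofNat_ne_zero, not_false_eq_true, zero_pow, zero_div, exp_zero]
  ring

lemma sum_mul_sq_mul_sum_mul_sq {ι : Type*} [Fintype ι] (c d x : ι → ℝ) :
    (∑ i, c i * x i) ^ 2 * (∑ i, d i * x i) ^ 2 =
      ((∑ i, (c + d) i * x i) ^ 4 + (∑ i, (c - d) i * x i) ^ 4
        - 2 * (∑ i, c i * x i) ^ 4 - 2 * (∑ i, d i * x i) ^ 4) / 12 := by
  simp only [Pi.add_apply, Pi.sub_apply, add_mul, sub_mul, Finset.sum_add_distrib,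
    Finset.sum_sub_distrib]
  ring

namespace ProbabilityTheory

lemma integral_pow_four_gaussianReal (v : ℝ≥0) :
    ∫ x, x ^ 4 ∂gaussianReal 0 v = 3 * (v : ℝ) ^ 2 := by
  have h := iteratedDeriv_mgf_zero (X := fun x => x) (μ := gaussianReal 0 v)
    (by simp [integrableExpSet_fun_id_gaussianReal]) 4
  rw [mgf_fun_id_gaussianReal] at h
  simpa [iteratedDeriv_four_exp_mul_sq_div_two] using h.symm

variable {Ω ι : Type*} [MeasurableSpace Ω] {μ : Measure Ω}

section HasLaw

variable {Y : Ω → ℝ} {m : ℝ} {v : ℝ≥0}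

lemma HasLaw.integrable_pow_of_gaussianReal (hY : HasLaw Y (gaussianReal m v) μ) (k : ℕ) :
    Integrable (fun ω => Y ω ^ k) μ := by
  have := hY.isProbabilityMeasure
  have hLp : MemLp Y k μ := hY.hasGaussianLaw.memLp (by simp)
  refine hLp.integrable_norm_pow'.mono' (hY.aemeasurable.pow_const k).aestronglyMeasurable ?_
  filter_upwards with ω
  simp [norm_pow]

lemma HasLaw.integral_pow_four_of_gaussianReal (hY : HasLaw Y (gaussianReal 0 v) μ) :
    ∫ ω, Y ω ^ 4 ∂μ = 3 * (v : ℝ) ^ 2 := by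
  rw [← integral_pow_four_gaussianReal, ← hY.integral_comp (by fun_prop)]
  rfl

end HasLaw

variable {X : ι → Ω → ℝ} {v : ι → ℝ≥0}

lemma iIndepFun.hasLaw_sum_mul_gaussianReal (hind : iIndepFun X μ)
    (hmeas : ∀ i, Measurable (X i)) (hX : ∀ i, HasLaw (X i) (gaussianReal 0 (v i)) μ)
    (c : ι → ℝ) (s : Finset ι) :
    HasLaw (fun ω => ∑ i ∈ s, c i * X i ω) (gaussianReal 0 (∑ i ∈ s, ‖c i‖₊ ^ 2 * v i)) μ := by
  classical
  have := hind.isProbabilityMeasure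
  induction s using Finset.induction_on with
  | empty =>
    simpa [gaussianReal_zero_var] using hasLaw_dirac_of_ae_eq (P := μ) (x := (0 : ℝ)) (by rfl)
  | insert i s hi ih =>
    have hindep : IndepFun (fun ω => c i * X i ω) (fun ω => ∑ j ∈ s, c j * X j ω) μ := by
      have h := (hind.comp (fun j x => c j * x) fun j => measurable_const_mul (c j))
        |>.indepFun_finsetSum_of_notMem (fun j => (hmeas j).const_mul (c j)) hi
      rw [Finset.sum_fn] at h
      exact h.symm
    have hci : HasLaw (fun ω => c i * X i ω) (gaussianReal 0 (‖c i‖₊ ^ 2 * v i)) μ := by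
      convert gaussianReal_const_mul (hX i) (c i) using 2
      · simp
      · ext; simp
    rw [Finset.sum_insert hi, ← add_zero (0 : ℝ), ← gaussianReal_conv_gaussianReal]
    simp only [Finset.sum_insert hi]
    exact hindep.hasLaw_fun_add hci ih

variable [Fintype ι]

lemma iIndepFun.integral_sum_mul_pow_four (hind : iIndepFun X μ)
    (hmeas : ∀ i, Measurable (X i)) (hX : ∀ i, HasLaw (X i) (gaussianReal 0 (v i)) μ)
    (c : ι → ℝ) :
    ∫ ω, (∑ i, c i * X i ω) ^ 4 ∂μ = 3 * (∑ i, c i ^ 2 * v i) ^ 2 := by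
  rw [(hind.hasLaw_sum_mul_gaussianReal hmeas hX c _).integral_pow_four_of_gaussianReal]
  simp

lemma iIndepFun.integrable_sum_mul_sq_mul_sum_mul_sq (hind : iIndepFun X μ)
    (hmeas : ∀ i, Measurable (X i)) (hX : ∀ i, HasLaw (X i) (gaussianReal 0 (v i)) μ)
    (c d : ι → ℝ) :
    Integrable (fun ω => (∑ i, c i * X i ω) ^ 2 * (∑ i, d i * X i ω) ^ 2) μ := by
  have h4 (e : ι → ℝ) : Integrable (fun ω => (∑ i, e i * X i ω) ^ 4) μ :=
    (hind.hasLaw_sum_mul_gaussianReal hmeas hX e _).integrable_pow_of_gaussianReal 4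
  simp_rw [sum_mul_sq_mul_sum_mul_sq c d]
  exact ((((h4 _).add (h4 _)).sub ((h4 c).const_mul 2)).sub ((h4 d).const_mul 2)).div_const 12

lemma iIndepFun.integral_sum_mul_sq_mul_sum_mul_sq (hind : iIndepFun X μ)
    (hmeas : ∀ i, Measurable (X i)) (hX : ∀ i, HasLaw (X i) (gaussianReal 0 (v i)) μ)
    (c d : ι → ℝ) :
    ∫ ω, (∑ i, c i * X i ω) ^ 2 * (∑ i, d i * X i ω) ^ 2 ∂μ =
      (∑ i, c i ^ 2 * v i) * (∑ i, d i ^ 2 * v i) + 2 * (∑ i, c i * d i * v i) ^ 2 := by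
  have h4 (e : ι → ℝ) : Integrable (fun ω => (∑ i, e i * X i ω) ^ 4) μ :=
    (hind.hasLaw_sum_mul_gaussianReal hmeas hX e _).integrable_pow_of_gaussianReal 4
  have hc := h4 c
  have hd := h4 d
  have hp := h4 (c + d)
  have hm := h4 (c - d)
  simp_rw [sum_mul_sq_mul_sum_mul_sq c d]
  rw [integral_div, integral_sub (by fun_prop) (by fun_prop),
    integral_sub (by fun_prop) (by fun_prop), integral_add hp hm, integral_const_mul,
    integral_const_mul]
  simp only [hind.integral_sum_mul_pow_four hmeas hX]
  simp only [Pi.add_apply, Pi.sub_apply, add_sq, sub_sq, add_mul, sub_mul, Finset.sum_add_distrib,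
    Finset.sum_sub_distrib, mul_assoc, ← Finset.mul_sum]
  ring

lemma iIndepFun.integral_sum_sq_sq {κ : Type*} [Fintype κ] (hind : iIndepFun X μ)
    (hmeas : ∀ i, Measurable (X i)) (hX : ∀ i, HasLaw (X i) (gaussianReal 0 (v i)) μ)
    (C : κ → ι → ℝ) :
    ∫ ω, (∑ l, (∑ i, C l i * X i ω) ^ 2) ^ 2 ∂μ =
      ∑ l, ∑ k, ((∑ i, C l i ^ 2 * v i) * (∑ i, C k i ^ 2 * v i)
        + 2 * (∑ i, C l i * C k i * v i) ^ 2) := by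
  have hsq (ω : Ω) : (∑ l, (∑ i, C l i * X i ω) ^ 2) ^ 2 =
      ∑ l, ∑ k, (∑ i, C l i * X i ω) ^ 2 * (∑ i, C k i * X i ω) ^ 2 := by
    rw [sq (∑ l, _), Finset.sum_mul_sum]
  have hint (l k : κ) := hind.integrable_sum_mul_sq_mul_sum_mul_sq hmeas hX (C l) (C k)
  simp_rw [hsq]
  rw [integral_finsetSum _ fun l _ => integrable_finsetSum _ fun k _ => hint l k]
  refine Finset.sum_congr rfl fun l _ => ?_
  rw [integral_finsetSum _ fun k _ => hint l k]
  exact Finset.sum_congr rfl fun k _ => hind.integral_sum_mul_sq_mul_sum_mul_sq hmeas hX (C l) (C k)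

end ProbabilityTheory

section Batches

noncomputable def batchCoeff (a b : ℕ) (l k : Fin a) : ℝ :=
  (if l = k then (b : ℝ)⁻¹ else 0) - ((a * b : ℕ) : ℝ)⁻¹

lemma batchCoeff_self {a : ℕ} (b : ℕ) (l : Fin a) :
    batchCoeff a b l l = (b : ℝ)⁻¹ - ((a * b : ℕ) : ℝ)⁻¹ := by
  simp [batchCoeff]

lemma batchCoeff_of_ne {a : ℕ} (b : ℕ) {l k : Fin a} (h : l ≠ k) :
    batchCoeff a b l k = -((a * b : ℕ) : ℝ)⁻¹ := by
  simp [batchCoeff, h]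

lemma sum_batchCoeff_mul_batchCoeff {a b : ℕ} (hb : b ≠ 0) (l q : Fin a) :
    ∑ k, batchCoeff a b l k * batchCoeff a b q k = batchCoeff a b l q / b := by
  have ha : (a : ℝ) ≠ 0 := by exact_mod_cast (Fin.pos l).ne'
  have hb : (b : ℝ) ≠ 0 := by exact_mod_cast hb
  simp only [batchCoeff, sub_mul, mul_sub, ite_mul, mul_ite, zero_mul, mul_zero,
    Finset.sum_sub_distrib, Finset.sum_ite_eq, Finset.mem_univ, if_true, Finset.sum_const,
    Finset.card_univ, Fintype.card_fin]
  split_ifs <;> push_cast [nsmul_eq_mul] <;> field_simp <;> ring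

lemma sum_batchCoeff_sq {a b : ℕ} (hb : b ≠ 0) (l : Fin a) :
    ∑ k, batchCoeff a b l k ^ 2 = batchCoeff a b l l / b := by
  simpa [sq] using sum_batchCoeff_mul_batchCoeff hb l l

variable {Ω : Type*}

def batchIncrement (B : ℝ → Ω → ℝ) (b l : ℕ) (ω : Ω) : ℝ :=
  B ((l * b + b : ℕ) : ℝ) ω - B ((l * b : ℕ) : ℝ) ω

lemma sum_batchIncrement (B : ℝ → Ω → ℝ) (a b : ℕ) (ω : Ω) :
    ∑ l : Fin a, batchIncrement B b l ω = B ((a * b : ℕ) : ℝ) ω - B 0 ω := by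
  rw [Fin.sum_univ_eq_sum_range (fun l => batchIncrement B b l ω)]
  convert Finset.sum_range_sub (fun l => B ((l * b : ℕ) : ℝ) ω) a using 2 with l
  · simp [batchIncrement, add_one_mul]
  · simp

variable {B : ℝ → Ω → ℝ}

lemma batch_mean_sub_mean_eq_sum_batchCoeff {a : ℕ} (b : ℕ) {ω : Ω} (hB0 : B 0 ω = 0)
    (l : Fin a) :
    (B ((l * b + b : ℕ) : ℝ) ω - B ((l * b : ℕ) : ℝ) ω) / b
        - B ((a * b : ℕ) : ℝ) ω / ((a * b : ℕ) : ℝ) =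
      ∑ k, batchCoeff a b l k * batchIncrement B b k ω := by
  simp only [batchCoeff, sub_mul, Finset.sum_sub_distrib, ite_mul, zero_mul, Finset.sum_ite_eq,
    Finset.mem_univ, if_true, ← Finset.mul_sum, sum_batchIncrement, hB0]
  simp only [batchIncrement]
  ring

variable [MeasurableSpace Ω] {μ : Measure Ω}

lemma IsStandardBM.measurable_batchIncrement (hB : IsStandardBM μ B) (b l : ℕ) :
    Measurable (batchIncrement B b l) := by
  obtain ⟨-, hmeas, -⟩ := hB
  exact (hmeas _).sub (hmeas _)

lemma IsStandardBM.hasLaw_batchIncrement (hB : IsStandardBM μ B) (b l : ℕ) :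
    HasLaw (batchIncrement B b l) (gaussianReal 0 b) μ where
  aemeasurable := (hB.measurable_batchIncrement b l).aemeasurable
  map_eq := by
    obtain ⟨-, -, -, hlaw, -⟩ := hB
    have h := hlaw ((l * b : ℕ) : ℝ) ((l * b + b : ℕ) : ℝ) (by positivity) (by simp)
    rwa [show ((l * b + b : ℕ) : ℝ) - ((l * b : ℕ) : ℝ) = b by push_cast; ring,
      Real.toNNReal_natCast] at h

lemma IsStandardBM.iIndepFun_batchIncrement (hB : IsStandardBM μ B) (a b : ℕ) :
    iIndepFun (fun l : Fin a => batchIncrement B b l) μ := by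
  obtain ⟨-, -, -, -, hindep⟩ := hB
  convert hindep a (fun i => ((i * b : ℕ) : ℝ))
    (fun i j hij => Nat.cast_le.mpr (Nat.mul_le_mul_right b hij)) (fun i => by positivity)
    using 3 with l ω
  simp [batchIncrement, add_one_mul]

end Batches

theorem sum_batch_mean_squares_second_moment
    {Ω : Type*} [MeasurableSpace Ω] (μ : Measure Ω) (B : ℝ → Ω → ℝ)
    (hB : IsStandardBM μ B) (a b : ℕ) (ha : 2 ≤ a) (hb : 1 ≤ b) (n : ℕ) (hn : n = a * b) :
    (∀ p q : ℕ, p < a → q < a → p ≠ q →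
      ∫ ω, ((B ((p * b + b : ℕ) : ℝ) ω - B ((p * b : ℕ) : ℝ) ω) / (b : ℝ)
              - B (n : ℝ) ω / (n : ℝ)) ^ 2 *
            ((B ((q * b + b : ℕ) : ℝ) ω - B ((q * b : ℕ) : ℝ) ω) / (b : ℝ)
              - B (n : ℝ) ω / (n : ℝ)) ^ 2 ∂μ
        = 3 / (n : ℝ) ^ 2 + 1 / (b : ℝ) ^ 2 - 2 / ((b : ℝ) * n)) ∧
    ∫ ω, (∑ l ∈ Finset.range a,
        ((B ((l * b + b : ℕ) : ℝ) ω - B ((l * b : ℕ) : ℝ) ω) / (b : ℝ)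
          - B (n : ℝ) ω / (n : ℝ)) ^ 2) ^ 2 ∂μ
      = 3 * a * (((n : ℝ) - b) / ((b : ℝ) * n)) ^ 2
        + (a : ℝ) * ((a : ℝ) - 1) * (3 / (n : ℝ) ^ 2 + 1 / (b : ℝ) ^ 2 - 2 / ((b : ℝ) * n)) := by
  subst hn
  have hb0 : b ≠ 0 := by omega
  have hb' : (b : ℝ) ≠ 0 := by positivity
  have hind := hB.iIndepFun_batchIncrement a b
  have hmeas (l : Fin a) := hB.measurable_batchIncrement b l
  have hlaw (l : Fin a) := hB.hasLaw_batchIncrement b l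
  have hZ (l : Fin a) (ω : Ω) := batch_mean_sub_mean_eq_sum_batchCoeff b (hB.2.2.1 ω) l
  refine ⟨fun p q hp hq hpq => ?_, ?_⟩
  · obtain ⟨l, rfl⟩ : ∃ l : Fin a, (l : ℕ) = p := ⟨⟨p, hp⟩, rfl⟩
    obtain ⟨k, rfl⟩ : ∃ k : Fin a, (k : ℕ) = q := ⟨⟨q, hq⟩, rfl⟩
    simp_rw [hZ]
    rw [hind.integral_sum_mul_sq_mul_sum_mul_sq hmeas hlaw]
    simp only [NNReal.coe_natCast, ← Finset.sum_mul, sum_batchCoeff_sq hb0,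
      sum_batchCoeff_mul_batchCoeff hb0, batchCoeff_self, batchCoeff_of_ne b (Fin.val_ne_iff.mp hpq)]
    field_simp
    ring
  · simp_rw [Finset.sum_range, hZ]
    rw [hind.integral_sum_sq_sq hmeas hlaw]
    have ha' : (a : ℝ) ≠ 0 := by positivity
    simp only [NNReal.coe_natCast, ← Finset.sum_mul, sum_batchCoeff_sq hb0,
      sum_batchCoeff_mul_batchCoeff hb0, div_mul_cancel₀ _ hb', Finset.sum_add_distrib,
      ← Finset.mul_sum, batchCoeff_self, Finset.sum_const, Finset.card_univ, Fintype.card_fin,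
      nsmul_eq_mul]
    push_cast
    field_simp
    ring
end

section
/- Let σ̂²_w be the weighted batch means estimator with the Bartlett flat top lag window (even bandwidth b, n = ab). Then σ̂²_w = 2σ̂²_bm - σ̂²_bm^{(2)}, where σ̂²_bm is the (univariate) batch means estimator with batch size b and σ̂²_bm^{(2)} is the batch means estimator with batch size b/2. -/
/-- The Bartlett flat top lag window with (even) bandwidth `b`. -/
noncomputable def flatTop (b : ℕ) (k : ℤ) : ℝ :=
  if |k| ≤ (b : ℤ) / 2 then 1
  else if |k| ≤ (b : ℤ) then 2 * (1 - |(k : ℝ)| / b)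
  else 0

/-- Second difference of a lag window. -/
noncomputable def Δ₂ (w : ℤ → ℝ) (k : ℤ) : ℝ := w (k - 1) - 2 * w k + w (k + 1)

/-- Overall mean of `Y₁, …, Yₙ`. -/
noncomputable def Ybar (Y : ℕ → ℝ) (n : ℕ) : ℝ := (1 / (n : ℝ)) * ∑ t ∈ Finset.range n, Y (t + 1)

/-- Mean of batch `l` of size `k`: `k⁻¹ ∑_{t=1}^{k} Y_{lk+t}`. -/
noncomputable def batchMean (Y : ℕ → ℝ) (k l : ℕ) : ℝ :=
  (1 / (k : ℝ)) * ∑ t ∈ Finset.range k, Y (l * k + t + 1)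

/-- Batch means estimator with batch size `k` (where `a_k = ⌊n/k⌋`). -/
noncomputable def bmEst (Y : ℕ → ℝ) (n k : ℕ) : ℝ :=
  ((k : ℝ) / ((n / k : ℕ) - 1)) *
    ∑ l ∈ Finset.range (n / k), (batchMean Y k l - Ybar Y n) ^ 2

/-- Weighted batch means estimator with lag window `w` and bandwidth `b`. -/
noncomputable def wbmEst (Y : ℕ → ℝ) (w : ℤ → ℝ) (n b : ℕ) : ℝ :=
  ∑ k ∈ Finset.Icc 1 b, (1 / (((n / k : ℕ) : ℝ) - 1)) *
    ∑ l ∈ Finset.range (n / k),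
      (k : ℝ) ^ 2 * Δ₂ w (k : ℤ) * (batchMean Y k l - Ybar Y n) ^ 2

/-!
Since `k² Δ₂w(k) / (a_k - 1) · ∑ₗ (Ȳₗ(k) - Ȳ)² = k Δ₂w(k) · σ̂²_bm(k)`, the weighted estimator is
`∑ₖ k Δ₂w(k) σ̂²_bm(k)` for any window. The flat top window with bandwidth `2m` is piecewise linear
with kinks only at `m` and `2m`, so its second difference vanishes elsewhere on `1, …, 2m`, while
`m Δ₂w(m) = -1` and `2m Δ₂w(2m) = 2`.
-/

open Finset

theorem wbmEst_eq_sum_mul_bmEst (Y : ℕ → ℝ) (w : ℤ → ℝ) (n b : ℕ) :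
    wbmEst Y w n b = ∑ k ∈ Icc 1 b, k * Δ₂ w k * bmEst Y n k := by
  simp only [wbmEst, bmEst, mul_sum]
  exact sum_congr rfl fun k _ => sum_congr rfl fun l _ => by ring

section FlatTop

variable {m : ℕ} {k : ℤ}

theorem flatTop_of_le_half (hk₀ : 0 ≤ k) (hkm : k ≤ m) : flatTop (2 * m) k = 1 := by
  rw [flatTop, abs_of_nonneg hk₀, if_pos (by push_cast; omega)]

theorem flatTop_of_half_le (hm : 0 < m) (hmk : m ≤ k) (hk : k ≤ 2 * m) :
    flatTop (2 * m) k = 2 - k / m := by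
  have hm' : (m : ℝ) ≠ 0 := by positivity
  have hk₀ : (0 : ℝ) ≤ k := by exact_mod_cast (show (0 : ℤ) ≤ k by omega)
  rw [flatTop, abs_of_nonneg (by omega), abs_of_nonneg hk₀]
  push_cast
  split_ifs with h₁
  · obtain rfl : k = m := by omega
    rw [Int.cast_natCast, div_self hm']
    norm_num
  · field_simp

theorem flatTop_of_lt {b : ℕ} (hk : b < k) : flatTop b k = 0 := by
  rw [flatTop, abs_of_nonneg (by omega), if_neg (by omega), if_neg (by omega)]

theorem Δ₂_flatTop_eq_zero (hm : 0 < m) (hk₀ : 0 < k) (hk : k < 2 * m) (hkm : k ≠ m) :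
    Δ₂ (flatTop (2 * m)) k = 0 := by
  rcases hkm.lt_or_gt with hkm | hkm
  · rw [Δ₂, flatTop_of_le_half (by omega) (by omega), flatTop_of_le_half (by omega) (by omega),
      flatTop_of_le_half (by omega) (by omega)]
    ring
  · rw [Δ₂, flatTop_of_half_le hm (by omega) (by omega), flatTop_of_half_le hm (by omega) hk.le,
      flatTop_of_half_le hm (by omega) (by omega)]
    push_cast
    ring

theorem Δ₂_flatTop_half (hm : 0 < m) : Δ₂ (flatTop (2 * m)) m = -1 / m := by
  have hm' : (m : ℝ) ≠ 0 := by positivity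
  rw [Δ₂, flatTop_of_le_half (by omega) (by omega), flatTop_of_le_half (by omega) le_rfl,
    flatTop_of_half_le hm (by omega) (by omega)]
  push_cast
  field_simp
  ring

theorem Δ₂_flatTop_bandwidth (hm : 0 < m) : Δ₂ (flatTop (2 * m)) (2 * m) = 1 / m := by
  have hm' : (m : ℝ) ≠ 0 := by positivity
  rw [Δ₂, flatTop_of_half_le hm (by omega) (by omega), flatTop_of_half_le hm (by omega) le_rfl,
    flatTop_of_lt (by omega)]
  push_cast
  field_simp
  ring

theorem sum_mul_Δ₂_flatTop (hm : 0 < m) (f : ℕ → ℝ) :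
    ∑ k ∈ Icc 1 (2 * m), k * Δ₂ (flatTop (2 * m)) k * f k = 2 * f (2 * m) - f m := by
  have hm' : (m : ℝ) ≠ 0 := by positivity
  have hsub : ({m, 2 * m} : Finset ℕ) ⊆ Icc 1 (2 * m) := by
    simp only [insert_subset_iff, singleton_subset_iff, mem_Icc]
    omega
  rw [← sum_subset hsub, sum_pair (by omega)]
  · push_cast
    rw [Δ₂_flatTop_half hm, Δ₂_flatTop_bandwidth hm]
    field_simp
    ring
  · intro k hk hkS
    simp only [mem_Icc] at hk
    simp only [mem_insert, mem_singleton, not_or] at hkS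
    rw [Δ₂_flatTop_eq_zero hm (by omega) (by omega) (by omega)]
    ring

end FlatTop

theorem weighted_bm_flat_top_eq_two_bm_general (Y : ℕ → ℝ) (b n : ℕ)
    (hb : 2 ≤ b) (hbe : Even b) :
    wbmEst Y (flatTop b) n b = 2 * bmEst Y n b - bmEst Y n (b / 2) := by
  obtain ⟨m, rfl⟩ := hbe
  rw [← two_mul, Nat.mul_div_cancel_left m two_pos, wbmEst_eq_sum_mul_bmEst]
  exact sum_mul_Δ₂_flatTop (by omega) (bmEst Y n)

theorem weighted_bm_flat_top_eq_two_bm (Y : ℕ → ℝ) (a b n : ℕ)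
    (ha : 2 ≤ a) (hb : 2 ≤ b) (hbe : Even b) (hn : n = a * b) :
    wbmEst Y (flatTop b) n b = 2 * bmEst Y n b - bmEst Y n (b / 2) :=
  weighted_bm_flat_top_eq_two_bm_general Y b n hb hbe
end
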